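/- For a smooth function f : ℝ⁴ → ℝ (coordinates (x₁,x₂,x₃,x₄)), let X_f be the vector field with components (X_f)ⱼ = Σᵢ ∂ᵢf · Mᵢⱼ (j = 1,…,4), where M is the skew-symmetric matrix with M₁₂ = x₃²+x₄², M₁₃ = x₂x₃−x₁x₄, M₁₄ = −(x₂x₄+x₁x₃), M₂₃ = x₁x₃+x₂x₄, M₂₄ = x₂x₃−x₁x₄, M₃₄ = x₁²+x₂². Then for every smooth f the divergence of X_f vanishes identically: Σⱼ ∂ⱼ((X_f)ⱼ) = 0 at every point of ℝ⁴. -/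

import Mathlib

/-- Partial derivative of `f : ℝ⁴ → ℝ` in the `i`-th coordinate direction;
indices `0,1,2,3` correspond to the coordinates x₁,x₂,x₃,x₄. -/
noncomputable def pd (i : Fin 4) (f : (Fin 4 → ℝ) → ℝ) (x : Fin 4 → ℝ) : ℝ :=
  fderiv ℝ f x (Pi.single i 1)

/-- The coefficient matrix of the quadratic Poisson bivector `π_C` at a
Lefschetz singular point (coordinates x₁,x₂,x₃,x₄ are the indices 0,1,2,3). -/
noncomputable def lefMatrix (x : Fin 4 → ℝ) : Matrix (Fin 4) (Fin 4) ℝ :=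
  !![0, (x 2) ^ 2 + (x 3) ^ 2, x 1 * x 2 - x 0 * x 3, -(x 1 * x 3 + x 0 * x 2);
     -((x 2) ^ 2 + (x 3) ^ 2), 0, x 0 * x 2 + x 1 * x 3, x 1 * x 2 - x 0 * x 3;
     -(x 1 * x 2 - x 0 * x 3), -(x 0 * x 2 + x 1 * x 3), 0, (x 0) ^ 2 + (x 1) ^ 2;
     x 1 * x 3 + x 0 * x 2, -(x 1 * x 2 - x 0 * x 3), -((x 0) ^ 2 + (x 1) ^ 2), 0]

/-- The Hamiltonian vector field `(X_f)ⱼ = Σᵢ ∂ᵢf · Mᵢⱼ` of the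
Lefschetz-singularity Poisson structure `π_C`. -/
noncomputable def lefHam (f : (Fin 4 → ℝ) → ℝ) (j : Fin 4) : (Fin 4 → ℝ) → ℝ :=
  fun x => ∑ i : Fin 4, pd i f x * lefMatrix x i j

lemma fderiv_coord (x : Fin 4 → ℝ) (k : Fin 4) :
    fderiv ℝ (fun y : Fin 4 → ℝ => y k) x = ContinuousLinearMap.proj k :=
  (ContinuousLinearMap.proj k : (Fin 4 → ℝ) →L[ℝ] ℝ).fderiv

set_option maxHeartbeats 2000000 in
/-- Hamiltonian vector fields of `π_C` are divergence free: `π_C` is unimodular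
for the standard volume form on ℝ⁴. -/
theorem lefBracket_unimodular (f : (Fin 4 → ℝ) → ℝ)
    (hf : ContDiff ℝ (⊤ : ℕ∞) f) (x : Fin 4 → ℝ) :
    ∑ j : Fin 4, pd j (lefHam f j) x = 0 := by
  have hd : ∀ i : Fin 4, Differentiable ℝ (fun y => fderiv ℝ f y (Pi.single i 1)) := fun i =>
    ((contDiff_infty_iff_fderiv.mp hf).2.differentiable
      (by simp)).clm_apply (differentiable_const _)
  have hd0 := hd 0; have hd1 := hd 1; have hd2 := hd 2; have hd3 := hd 3
  unfold lefHam
  simp only [Fin.sum_univ_four, lefMatrix, Matrix.cons_val', Matrix.cons_val_zero,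
    Matrix.cons_val_one, Matrix.head_cons, Matrix.empty_val', Matrix.cons_val_fin_one,
    Matrix.head_fin_const, Matrix.of_apply, Matrix.cons_val_two, Matrix.cons_val_three,
    Matrix.tail_cons, mul_zero, zero_add, add_zero]
  simp (disch := fun_prop) only [pd, pow_two, fderiv_fun_add, fderiv_fun_sub, fderiv_fun_mul, fderiv_fun_neg,
    fderiv_coord, ContinuousLinearMap.add_apply, ContinuousLinearMap.smul_apply,
    ContinuousLinearMap.neg_apply, ContinuousLinearMap.sub_apply,
    ContinuousLinearMap.proj_apply, Pi.single_apply, Fin.isValue, smul_eq_mul, Fin.reduceEq, reduceIte]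
  have key : ∀ i j : Fin 4, fderiv ℝ (fun y => fderiv ℝ f y (Pi.single i 1)) x (Pi.single j 1)
      = fderiv ℝ (fderiv ℝ f) x (Pi.single j 1) (Pi.single i 1) := by
    intro i j
    rw [fderiv_clm_apply ((contDiff_infty_iff_fderiv.mp hf).2.differentiable
      (by simp) x) (differentiableAt_const _)]
    simp
  have hsnd : IsSymmSndFDerivAt ℝ f x :=
    hf.contDiffAt.isSymmSndFDerivAt
      (by rw [minSmoothness_of_isRCLikeNormedField]; exact WithTop.coe_le_coe.mpr (le_top : (2:ℕ∞) ≤ ⊤))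
  simp only [key]
  rw [hsnd (Pi.single 1 1) (Pi.single 0 1), hsnd (Pi.single 2 1) (Pi.single 0 1),
      hsnd (Pi.single 3 1) (Pi.single 0 1), hsnd (Pi.single 2 1) (Pi.single 1 1),
      hsnd (Pi.single 3 1) (Pi.single 1 1), hsnd (Pi.single 3 1) (Pi.single 2 1)]
  ring
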